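/- Let Σ be a ranked alphabet, Γ an output alphabet, and S a sample (a finite set of pairs (t, w) with t ∈ Trees(Σ) and w ∈ Γ*, each tree paired with at most one word). Then there exists a 1STS τ over Σ such that ⟦τ⟧(t) = w for all (t, w) ∈ S if and only if there exists a morphism μ : Σ̄* → Γ* such that μ(yield_Σ(t)) = w for all (t, w) ∈ S. -/
import Mathlib


/-- Trees labelled by symbols from `F`, with a finite list of children at each node. -/
inductive RTree (F : Type) : Type
  | node (f : F) (children : List (RTree F)) : RTree F

namespace RTree

mutual
  /-- The word `yield_Σ(f(t₁,…,t_k)) = (f,0)·yield_Σ(t₁)·(f,1)⋯yield_Σ(t_k)·(f,k)`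
  over the alphabet `Σ̄ = F × ℕ`. -/
  def yieldW {F : Type} : RTree F → List (F × ℕ)
    | .node f ts => (f, 0) :: yieldList f 1 ts
  def yieldList {F : Type} (f : F) : ℕ → List (RTree F) → List (F × ℕ)
    | _, [] => []
    | i, t :: ts => yieldW t ++ (f, i) :: yieldList f (i + 1) ts
end

mutual
  /-- The semantics `⟦τ⟧` of a 1STS whose constants are `δ(f) = (τ f 0, …, τ f (ar f))`:
  `⟦τ⟧(f(t₁,…,t_k)) = u₀·⟦τ⟧(t₁)·u₁⋯⟦τ⟧(t_k)·u_k`. -/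
  def sem {F Γ : Type} (τ : F → ℕ → List Γ) : RTree F → List Γ
    | .node f ts => τ f 0 ++ semList τ f 1 ts
  def semList {F Γ : Type} (τ : F → ℕ → List Γ) (f : F) : ℕ → List (RTree F) → List Γ
    | _, [] => []
    | i, t :: ts => sem τ t ++ τ f i ++ semList τ f (i + 1) ts
end

end RTree

namespace RTree

mutual
theorem sem_eq_flatMap {F Γ : Type} (τ : F → ℕ → List Γ) :
    ∀ t : RTree F, sem τ t = (yieldW t).flatMap (fun p => τ p.1 p.2)
  | .node f ts => by
      rw [sem, yieldW, List.flatMap_cons, semList_eq_flatMap]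
theorem semList_eq_flatMap {F Γ : Type} (τ : F → ℕ → List Γ) (f : F) :
    ∀ (i : ℕ) (ts : List (RTree F)),
      semList τ f i ts = (yieldList f i ts).flatMap (fun p => τ p.1 p.2)
  | _, [] => by rw [semList, yieldList, List.flatMap_nil]
  | i, t :: ts => by
      rw [semList, yieldList, List.flatMap_append, List.flatMap_cons,
        sem_eq_flatMap, semList_eq_flatMap, List.append_assoc]
end

end RTree

theorem hom_ofList_eq {Γ : Type} {M : Type} [Monoid M] (μ : FreeMonoid Γ →* M) :
    ∀ l : List Γ, μ (FreeMonoid.ofList l) = (l.map (fun a => μ (FreeMonoid.of a))).prod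
  | [] => by simp
  | a :: l => by
      rw [← List.singleton_append, FreeMonoid.ofList_append, map_mul,
        hom_ofList_eq μ l, List.map_append, List.prod_append, List.map_singleton,
        List.prod_singleton]
      rfl

theorem ofList_flatMap_eq {Γ Δ : Type} (g : Δ → List Γ) (l : List Δ) :
    FreeMonoid.ofList (l.flatMap g) = (l.map (fun a => FreeMonoid.ofList (g a))).prod := by
  induction l with
  | nil => rfl
  | cons a l ih =>
      rw [List.flatMap_cons, FreeMonoid.ofList_append, List.map_cons, List.prod_cons, ih]

/-- There is a 1STS consistent with a sample `S` iff there is a morphism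
`μ : Σ̄* → Γ*` with `μ(yield_Σ(t)) = w` for every `(t, w) ∈ S`. -/

theorem exists_1STS_iff_exists_morphism {F Γ : Type} (S : Set (RTree F × List Γ))
    (hfin : S.Finite)
    (hfun : ∀ t w w', (t, w) ∈ S → (t, w') ∈ S → w = w') :
    (∃ τ : F → ℕ → List Γ, ∀ p ∈ S, RTree.sem τ p.1 = p.2) ↔
      (∃ μ : FreeMonoid (F × ℕ) →* FreeMonoid Γ,
        ∀ p ∈ S, μ (FreeMonoid.ofList (RTree.yieldW p.1)) = FreeMonoid.ofList p.2) := by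

  constructor
  · rintro ⟨τ, hτ⟩
    refine ⟨FreeMonoid.lift (fun p => FreeMonoid.ofList (τ p.1 p.2)), fun p hp => ?_⟩
    rw [hom_ofList_eq, ← hτ p hp, RTree.sem_eq_flatMap, ofList_flatMap_eq]
    simp
  · rintro ⟨μ, hμ⟩
    refine ⟨fun f i => FreeMonoid.toList (μ (FreeMonoid.of (f, i))), fun p hp => ?_⟩
    have h := hμ p hp
    rw [hom_ofList_eq] at h
    rw [RTree.sem_eq_flatMap]
    have : FreeMonoid.ofList (((RTree.yieldW p.1).flatMap
        fun q => FreeMonoid.toList (μ (FreeMonoid.of (q.1, q.2))))) = FreeMonoid.ofList p.2 := by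
      rw [ofList_flatMap_eq, ← h]
      simp
    simpa using congrArg FreeMonoid.toList this
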